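/- Let R be a commutative local ring with maximal ideal m. Then in S = R[[y]], the n-th power of the ideal M = ⟨m, y⟩ satisfies Mⁿ = Σ_{i+j=n} mⁱ · yʲ S, i.e., Mⁿ is the set of power series Σ rⱼ yʲ with rⱼ ∈ m^{n−j} for all j < n. -/

import Mathlib

/-!
Let `Fₙ` be the ideal of power series whose `j`-th coefficient lies in `mⁿ⁻ʲ`. Multiplying
series adds the exponents, so `Fₐ * F_b ≤ F_(a+b)`, and `M ≤ F₁`; hence `Mⁿ ≤ Fₙ`. Conversely,
`f = g * X + C (f 0)` with `g ∈ Fₙ₋₁` and `f 0 ∈ mⁿ`, so `Fₙ ≤ Mⁿ` by induction on `n`.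
-/

namespace PowerSeries

variable {R : Type*} [CommRing R]

/-- For `j ≥ n` the condition on the `j`-th coefficient is vacuous, as `I ^ (n - j) = I ^ 0 = ⊤`. -/
def coeffFiltration (I : Ideal R) (n : ℕ) : Ideal R⟦X⟧ where
  carrier := {f | ∀ j, coeff j f ∈ I ^ (n - j)}
  add_mem' hf hg j := by rw [map_add]; exact add_mem (hf j) (hg j)
  zero_mem' j := by simp
  smul_mem' c f hf j := by
    rw [smul_eq_mul, coeff_mul]
    refine Ideal.sum_mem _ fun p hp => ?_
    have hj := Finset.HasAntidiagonal.mem_antidiagonal.mp hp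
    exact Ideal.mul_mem_left _ _ (Ideal.pow_le_pow_right (by omega) (hf p.2))

variable {I : Ideal R}

theorem mem_coeffFiltration_iff {n : ℕ} {f : R⟦X⟧} :
    f ∈ coeffFiltration I n ↔ ∀ j < n, coeff j f ∈ I ^ (n - j) := by
  refine ⟨fun hf j _ => hf j, fun hf j => ?_⟩
  rcases lt_or_ge j n with hj | hj
  · exact hf j hj
  · simp [Nat.sub_eq_zero_of_le hj]

theorem coeffFiltration_mul_le (a b : ℕ) :
    coeffFiltration I a * coeffFiltration I b ≤ coeffFiltration I (a + b) := by
  refine Ideal.mul_le.mpr fun f hf g hg j => ?_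
  rw [coeff_mul]
  refine Ideal.sum_mem _ fun p hp => ?_
  have hj := Finset.HasAntidiagonal.mem_antidiagonal.mp hp
  have hle : I ^ (a - p.1) * I ^ (b - p.2) ≤ I ^ (a + b - j) := by
    rw [← pow_add]
    exact Ideal.pow_le_pow_right (by omega)
  exact hle (Ideal.mul_mem_mul (hf p.1) (hg p.2))

theorem span_C_union_X_le_coeffFiltration_one :
    Ideal.span (C '' (I : Set R) ∪ {X}) ≤ coeffFiltration I 1 := by
  rw [Ideal.span_le]
  rintro g (⟨r, hr, rfl⟩ | rfl) j
  · cases j <;> simp [coeff_C, SetLike.mem_coe.mp hr]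
  · rcases j with _ | _ | j <;> simp [coeff_X]

theorem span_C_union_X_pow_le_coeffFiltration (n : ℕ) :
    Ideal.span (C '' (I : Set R) ∪ {X}) ^ n ≤ coeffFiltration I n := by
  induction n with
  | zero => exact fun _ _ j => by simp
  | succ k ih =>
    rw [pow_succ]
    exact (Ideal.mul_mono ih span_C_union_X_le_coeffFiltration_one).trans
      (coeffFiltration_mul_le k 1)

theorem coeffFiltration_le_span_C_union_X_pow (n : ℕ) :
    coeffFiltration I n ≤ Ideal.span (C '' (I : Set R) ∪ {X}) ^ n := by
  set M := Ideal.span (C '' (I : Set R) ∪ {X})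
  have hX : X ∈ M := Ideal.subset_span (Or.inr rfl)
  have hC : Ideal.map C I ≤ M :=
    Ideal.map_le_iff_le_comap.mpr fun r hr => Ideal.subset_span (Or.inl ⟨r, hr, rfl⟩)
  induction n with
  | zero => simp
  | succ k ih =>
    intro f hf
    rw [eq_shift_mul_X_add_const f, pow_succ]
    have hshift : mk (fun p => coeff (p + 1) f) ∈ coeffFiltration I k := fun j => by
      simpa using hf (j + 1)
    have hconst : C (constantCoeff f) ∈ Ideal.map C I ^ (k + 1) := by
      rw [← Ideal.map_pow]
      exact Ideal.mem_map_of_mem _ (by simpa using hf 0)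
    exact add_mem (Ideal.mul_mem_mul (ih hshift) hX) (Ideal.pow_right_mono hC _ hconst)

theorem span_C_union_X_pow_eq_coeffFiltration (n : ℕ) :
    Ideal.span (C '' (I : Set R) ∪ {X}) ^ n = coeffFiltration I n :=
  le_antisymm (span_C_union_X_pow_le_coeffFiltration n) (coeffFiltration_le_span_C_union_X_pow n)

end PowerSeries

/-- In `S = R[[y]]` over a commutative local ring `R` with maximal ideal `m`, the `n`-th
power of `M = ⟨m, y⟩` consists exactly of the power series `Σ rⱼ yʲ` with `rⱼ ∈ m^(n-j)`
for all `j < n`. -/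
theorem stmt6 (R : Type*) [CommRing R] [IsLocalRing R] (n : ℕ) (f : PowerSeries R) :
    f ∈ (Ideal.span (PowerSeries.C '' (IsLocalRing.maximalIdeal R) ∪ {PowerSeries.X})) ^ n ↔
      ∀ j < n, PowerSeries.coeff j f ∈ (IsLocalRing.maximalIdeal R) ^ (n - j) := by
  rw [PowerSeries.span_C_union_X_pow_eq_coeffFiltration, PowerSeries.mem_coeffFiltration_iff]
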